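/- Let (K, α) be a Z₂-simplicial complex on a vertex type V and let G = (W, E) be a graph. The assignments Φ(f)(v) = (f(v), f(α(v))) and Ψ(g)(v) = (g(v)).1 are mutually inverse: for every graph homomorphism f from A(K, α) to G one has Ψ(Φ(f)) = f, and for every Z₂-simplicial map g from (K, α) to B(G) one has Φ(Ψ(g)) = g. In particular, Φ is a bijection between graph homomorphisms A(K, α) → G and Z₂-simplicial maps (K, α) → B(G) (the adjunction between Csorba's functor A and the box complex functor B). -/

import Mathlib

/-- A (finite abstract) simplicial complex on a vertex type `V`: a set of nonempty
finite subsets of `V`, closed under nonempty subsets and containing all singletons. -/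
def IsComplex {V : Type*} (K : Set (Finset V)) : Prop :=
  (∀ σ ∈ K, σ.Nonempty) ∧ (∀ σ ∈ K, ∀ τ : Finset V, τ ⊆ σ → τ.Nonempty → τ ∈ K) ∧
    (∀ v : V, ({v} : Finset V) ∈ K)

/-- A Z₂-simplicial complex: a simplicial complex together with a simplicial involution. -/
def IsZ2Complex {V : Type*} [DecidableEq V] (K : Set (Finset V)) (α : V → V) : Prop :=
  IsComplex K ∧ (∀ v, α (α v) = v) ∧ (∀ σ ∈ K, σ.image α ∈ K)

/-- The box complex `B(G)` of a graph `G = (W, E)`: simplices are the nonempty finite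
subsets `σ` of `W × W` such that `E a b'` and `E a' b` hold for all `(a,b), (a',b') ∈ σ`.
Its involution is `Prod.swap`. -/
def BoxCpx {W : Type*} (E : W → W → Prop) : Set (Finset (W × W)) :=
  {σ | σ.Nonempty ∧ ∀ p ∈ σ, ∀ q ∈ σ, E p.1 q.2 ∧ E q.1 p.2}

/-- A Z₂-simplicial map from `(K, α)` to `(L, β)`. -/
def IsZ2Map {V W : Type*} [DecidableEq W] (K : Set (Finset V)) (α : V → V)
    (L : Set (Finset W)) (β : W → W) (f : V → W) : Prop :=
  (∀ σ ∈ K, σ.image f ∈ L) ∧ (∀ v, f (α v) = β (f v))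

/-- Graph homomorphisms from Csorba's graph `A(K, α)` to `(W, E)`. -/
def IsCsorbaHom {V W : Type*} [DecidableEq V] (K : Set (Finset V)) (α : V → V)
    (E : W → W → Prop) (f : V → W) : Prop :=
  ∀ v w : V, ({α v, w} : Finset V) ∈ K → E (f v) (f w)

theorem IsComplex.pair_mem {V : Type*} [DecidableEq V] {K : Set (Finset V)} (hK : IsComplex K)
    {σ : Finset V} (hσ : σ ∈ K) {v w : V} (hv : v ∈ σ) (hw : w ∈ σ) :
    ({v, w} : Finset V) ∈ K :=
  hK.2.1 σ hσ _ (Finset.insert_subset hv (Finset.singleton_subset_iff.2 hw)) (by simp)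

theorem IsZ2Complex.pair_image_mem {V : Type*} [DecidableEq V] {K : Set (Finset V)}
    {α : V → V} (hK : IsZ2Complex K α) {v w : V} (h : ({v, w} : Finset V) ∈ K) :
    ({α v, α w} : Finset V) ∈ K := by
  simpa [Finset.image_insert] using hK.2.2 _ h

theorem IsZ2Map.pair_fst_eq {V W : Type*} [DecidableEq W] {K : Set (Finset V)} {α : V → V}
    {L : Set (Finset (W × W))} {g : V → W × W} (hg : IsZ2Map K α L Prod.swap g) :
    (fun v => ((g v).1, (g (α v)).1)) = g :=
  funext fun v => by simp [hg.2 v]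

section

variable {V W : Type*} [DecidableEq V] [DecidableEq W] {K : Set (Finset V)} {α : V → V}
  {E : W → W → Prop}

theorem IsCsorbaHom.isZ2Map_box (hK : IsZ2Complex K α) {f : V → W} (hf : IsCsorbaHom K α E f) :
    IsZ2Map K α (BoxCpx E) Prod.swap (fun v => (f v, f (α v))) := by
  have hE : ∀ σ ∈ K, ∀ v ∈ σ, ∀ w ∈ σ, E (f v) (f (α w)) := fun σ hσ v hv w hw =>
    hf v (α w) (hK.pair_image_mem (hK.1.pair_mem hσ hv hw))
  refine ⟨fun σ hσ => ⟨(hK.1.1 σ hσ).image _, ?_⟩, fun v => by simp [hK.2.1 v]⟩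
  simp only [Finset.mem_image]
  rintro _ ⟨v, hv, rfl⟩ _ ⟨w, hw, rfl⟩
  exact ⟨hE σ hσ v hv w hw, hE σ hσ w hw v hv⟩

theorem IsZ2Map.fst_isCsorbaHom (hK : IsZ2Complex K α) {g : V → W × W}
    (hg : IsZ2Map K α (BoxCpx E) Prod.swap g) : IsCsorbaHom K α E (fun v => (g v).1) := by
  intro v w hvw
  -- `{α v, w} ∈ K` gives `{v, α w} ∈ K`, whose image `{g v, swap (g w)}` is a box simplex.
  have hbox := hg.1 _ (by simpa [hK.2.1 v] using hK.pair_image_mem hvw)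
  simp only [Finset.image_insert, Finset.image_singleton] at hbox
  simpa [hg.2 w] using (hbox.2 (g v) (by simp) (g (α w)) (by simp)).1

end

theorem stmt2_general {V W : Type*} [DecidableEq V] [DecidableEq W]
    (K : Set (Finset V)) (α : V → V) (hK : IsZ2Complex K α)
    (E : W → W → Prop) :
    (∀ f : V → W, (∀ v w : V, ({α v, w} : Finset V) ∈ K → E (f v) (f w)) →
      (fun v => (((f v, f (α v)) : W × W)).1) = f) ∧
    (∀ g : V → W × W, IsZ2Map K α (BoxCpx E) Prod.swap g →
      (fun v => (((g v).1, (g (α v)).1) : W × W)) = g) ∧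
    Set.BijOn (fun (f : V → W) => (fun v => ((f v, f (α v)) : W × W)))
      {f : V → W | ∀ v w : V, ({α v, w} : Finset V) ∈ K → E (f v) (f w)}
      {g : V → W × W | IsZ2Map K α (BoxCpx E) Prod.swap g} := by
  have hΦ_injective : Function.Injective fun (f : V → W) v => ((f v, f (α v)) : W × W) :=
    fun f f' h => funext fun v => congrArg Prod.fst (congrFun h v)
  exact ⟨fun f _ => rfl, fun g hg => hg.pair_fst_eq,
    fun f hf => IsCsorbaHom.isZ2Map_box hK hf, hΦ_injective.injOn,
    fun g hg => ⟨_, hg.fst_isCsorbaHom hK, hg.pair_fst_eq⟩⟩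

/-- The assignments `Φ(f)(v) = (f v, f (α v))` and `Ψ(g)(v) = (g v).1` are mutually
inverse between graph homomorphisms `A(K, α) → G` and Z₂-simplicial maps `(K, α) → B(G)`;
in particular `Φ` is a bijection between these two sets of maps. -/
theorem stmt2 {V W : Type*} [DecidableEq V] [DecidableEq W]
    (K : Set (Finset V)) (α : V → V) (hK : IsZ2Complex K α)
    (E : W → W → Prop) (hEsymm : ∀ a b : W, E a b → E b a) :
    (∀ f : V → W, (∀ v w : V, ({α v, w} : Finset V) ∈ K → E (f v) (f w)) →
      (fun v => (((f v, f (α v)) : W × W)).1) = f) ∧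
    (∀ g : V → W × W, IsZ2Map K α (BoxCpx E) Prod.swap g →
      (fun v => (((g v).1, (g (α v)).1) : W × W)) = g) ∧
    Set.BijOn (fun (f : V → W) => (fun v => ((f v, f (α v)) : W × W)))
      {f : V → W | ∀ v w : V, ({α v, w} : Finset V) ∈ K → E (f v) (f w)}
      {g : V → W × W | IsZ2Map K α (BoxCpx E) Prod.swap g} :=
  stmt2_general K α hK E
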